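/- arXiv:1906.04719 — 2 statements merged into one kernel-verified Lean document; each statement's English description precedes it below -/
import Mathlib

section
/- Let P ⊂ ℝ^d be a locally anti-blocking lattice polytope of dimension d, and for each ε ∈ {−1,1}^d let P_ε ⊆ ℝ^d_{≥0} be a d-dimensional anti-blocking lattice polytope with P ∩ ℝ^d_ε = P_ε^± ∩ ℝ^d_ε. Then h*(P, x) = (1/2^d) · ∑_{ε ∈ {−1,1}^d} h*(P_ε^±, x). In particular, h*(P, x) is γ-positive whenever h*(P_ε^±, x) is γ-positive for every ε ∈ {−1,1}^d. -/
open scoped Pointwise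
open Polynomial

namespace ABP

variable {V : Type*}

/-- A point of `ℝ^V` all of whose coordinates are integers. -/
def IsLatticePoint (x : V → ℝ) : Prop := ∀ i, ∃ z : ℤ, x i = (z : ℝ)

/-- A lattice polytope: the convex hull of finitely many lattice points. -/
def IsLatticePolytope [Fintype V] (P : Set (V → ℝ)) : Prop :=
  ∃ S : Finset (V → ℝ), (∀ v ∈ S, IsLatticePoint v) ∧ P = convexHull ℝ (S : Set (V → ℝ))

/-- The dimension of a polytope, as the rank of its vector span. -/
noncomputable def polyDim [Fintype V] (P : Set (V → ℝ)) : ℕ :=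
  Module.finrank ℝ (vectorSpan ℝ P)

/-- The number of lattice points of the `m`-th dilate of `P`. -/
noncomputable def latticeCount [Fintype V] (P : Set (V → ℝ)) (m : ℕ) : ℕ :=
  Set.ncard {x : V → ℤ | (fun i => (x i : ℝ)) ∈ (m : ℝ) • P}

/-- `h` is the `h^*`-polynomial of the lattice polytope `P`:
`(1 + ∑_{m≥1} L_P(m) x^m) · (1-x)^{dim P + 1} = h` as formal power series. -/
def IsHStar [Fintype V] (P : Set (V → ℝ)) (h : Polynomial ℝ) : Prop :=
  (PowerSeries.mk fun m => if m = 0 then (1 : ℝ) else (latticeCount P m : ℝ)) *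
      (1 - PowerSeries.X) ^ (polyDim P + 1) = (h : PowerSeries ℝ)

/-- `f` is γ-positive: `f = ∑ γ_i x^i (1+x)^{deg f - 2i}` with all `γ_i ≥ 0`. -/
def GammaPositive (f : Polynomial ℝ) : Prop :=
  ∃ γ : ℕ → ℝ, (∀ i, 0 ≤ γ i) ∧
    f = ∑ i ∈ Finset.range (f.natDegree / 2 + 1),
      Polynomial.C (γ i) * Polynomial.X ^ i * (1 + Polynomial.X) ^ (f.natDegree - 2 * i)

/-- A real polynomial is real-rooted if all of its complex roots are real. -/
def RealRooted (f : Polynomial ℝ) : Prop :=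
  ∀ z : ℂ, (f.map (algebraMap ℝ ℂ)).IsRoot z → z.im = 0

/-- The `±1`-vector associated to `ε : V → Bool`. -/
def signVec (ε : V → Bool) : V → ℝ := fun i => if ε i then 1 else -1

/-- The unconditional set `P^± = {εx : ε ∈ {-1,1}^V, x ∈ P}`. -/
def uncond (P : Set (V → ℝ)) : Set (V → ℝ) :=
  {y | ∃ (ε : V → Bool) (x : V → ℝ), x ∈ P ∧ y = signVec ε * x}

/-- The closed orthant `ℝ^V_ε`. -/
def orthant (ε : V → Bool) : Set (V → ℝ) := {x | ∀ i, 0 ≤ signVec ε i * x i}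

/-- Anti-blocking set: contained in the nonnegative orthant and downward closed there. -/
def IsAntiBlocking (P : Set (V → ℝ)) : Prop :=
  (∀ x ∈ P, ∀ i, 0 ≤ x i) ∧
    ∀ y ∈ P, ∀ x : V → ℝ, (∀ i, 0 ≤ x i ∧ x i ≤ y i) → x ∈ P

/-- Locally anti-blocking (full-dimensional) lattice polytope. -/
def LocallyAntiBlocking [Fintype V] (P : Set (V → ℝ)) : Prop :=
  ∀ ε : V → Bool, ∃ Q : Set (V → ℝ), IsLatticePolytope Q ∧ IsAntiBlocking Q ∧
    polyDim Q = Fintype.card V ∧ P ∩ orthant ε = uncond Q ∩ orthant ε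

/-- The dual (polar) body of `P`. -/
def dualPoly [Fintype V] (P : Set (V → ℝ)) : Set (V → ℝ) :=
  {y | ∀ x ∈ P, ∑ i, x i * y i ≤ 1}

/-- `P` is a reflexive polytope. -/
def IsReflexive [Fintype V] (P : Set (V → ℝ)) : Prop :=
  IsLatticePolytope P ∧ (0 : V → ℝ) ∈ interior P ∧ IsLatticePolytope (dualPoly P)

/-- The `i`-th unit coordinate vector. -/
def unitVec [DecidableEq V] (i : V) : V → ℝ := fun j => if j = i then 1 else 0

/-- Symmetric edge polytope of type A: `conv{±(e_i - e_j) : {i,j} ∈ E(G)}`. -/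
def symEdgeA [DecidableEq V] (G : SimpleGraph V) : Set (V → ℝ) :=
  convexHull ℝ {v | ∃ i j, G.Adj i j ∧ v = unitVec i - unitVec j}

/-- The polytope `B_G = conv({0, e_1, …, e_d} ∪ {e_i + e_j : {i,j} ∈ E(G)})`. -/
def typeBBase [DecidableEq V] (G : SimpleGraph V) : Set (V → ℝ) :=
  convexHull ℝ ({0} ∪ {v | ∃ i, v = unitVec i} ∪
    {v | ∃ i j, G.Adj i j ∧ v = unitVec i + unitVec j})

/-- Symmetric edge polytope of type B: `𝓑_G = (B_G)^±`. -/
def symEdgeB [DecidableEq V] (G : SimpleGraph V) : Set (V → ℝ) := uncond (typeBBase G)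

/-- The suspension of a graph on `Fin d`: a new vertex joined to all old vertices. -/
def suspension {d : ℕ} (G : SimpleGraph (Fin d)) : SimpleGraph (Fin (d + 1)) :=
  SimpleGraph.fromRel (fun a b =>
    (∃ p q : Fin d, G.Adj p q ∧ a = p.castSucc ∧ b = q.castSucc) ∨
      (a ≠ Fin.last d ∧ b = Fin.last d))

/-- The cut `E_S` of `G`, as a spanning subgraph of `G`. -/
def cutGraph [DecidableEq V] (G : SimpleGraph V) (S : Finset V) : SimpleGraph V :=
  SimpleGraph.fromRel (fun a b => G.Adj a b ∧ ((a ∈ S) ↔ (b ∉ S)))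

/-- Contraction of the edge `{i,j}`: merge `j` into `i` (the vertex `j` becomes isolated,
so that the resulting polytopes are the same as for the contracted graph on `d-1` vertices). -/
def contractEdge {d : ℕ} (G : SimpleGraph (Fin d)) (i j : Fin d) : SimpleGraph (Fin d) :=
  SimpleGraph.fromRel (fun a b => a ≠ j ∧ b ≠ j ∧
    (G.Adj a b ∨ (a = i ∧ G.Adj j b) ∨ (b = i ∧ G.Adj a j)))

/-- The graph `G̃` attached to a bipartite graph `G` with bipartition `V₁ ∪ V₁ᶜ`. -/
def tildeGraph {d : ℕ} (G : SimpleGraph (Fin d)) (V1 : Finset (Fin d)) :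
    SimpleGraph (Fin (d + 2)) :=
  SimpleGraph.fromRel (fun a b =>
    (∃ p q : Fin d, G.Adj p q ∧ a = p.castSucc.castSucc ∧ b = q.castSucc.castSucc) ∨
    (∃ p ∈ V1, a = (p.castSucc.castSucc : Fin (d + 2)) ∧ b = (⟨d, by omega⟩ : Fin (d + 2))) ∨
    (∃ p : Fin d, p ∉ V1 ∧ a = p.castSucc.castSucc ∧ b = (⟨d + 1, by omega⟩ : Fin (d + 2))) ∨
    (a = (⟨d, by omega⟩ : Fin (d + 2)) ∧ b = (⟨d + 1, by omega⟩ : Fin (d + 2))))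

/-- Unimodular (lattice) equivalence of polytopes. -/
def UnimodEquiv {n m : ℕ} (P : Set (Fin n → ℝ)) (Q : Set (Fin m → ℝ)) : Prop :=
  ∃ (f : (Fin n → ℝ) →ᵃ[ℝ] (Fin m → ℝ)) (g : (Fin m → ℝ) →ᵃ[ℝ] (Fin n → ℝ)),
    f '' P = Q ∧ g '' Q = P ∧ (∀ x ∈ P, g (f x) = x) ∧ (∀ y ∈ Q, f (g y) = y) ∧
    (∀ x, IsLatticePoint x → IsLatticePoint (f x)) ∧
    (∀ y, IsLatticePoint y → IsLatticePoint (g y))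

/-- A subgraph is 2-connected: connected, and still connected after deleting any vertex. -/
def TwoConnSub {G : SimpleGraph V} (B : G.Subgraph) : Prop :=
  B.Connected ∧ ∀ v ∈ B.verts, (B.deleteVerts {v}).Connected

/-- A block (2-connected component) of `G`: a maximal 2-connected subgraph. -/
def IsBlock (G : SimpleGraph V) (B : G.Subgraph) : Prop :=
  TwoConnSub B ∧ ∀ B' : G.Subgraph, B ≤ B' → TwoConnSub B' → B' = B

/-- The coordinate projection `π_J` of a subset of `ℝ^d` onto `ℝ^{|J|}`. -/
def projSet {d : ℕ} (J : Finset (Fin d)) (P : Set (Fin d → ℝ)) : Set (Fin J.card → ℝ) :=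
  (fun (x : Fin d → ℝ) (k : Fin J.card) => x (J.orderEmbOfFin rfl k)) '' P

section Posets

variable {d : ℕ}

/-- `A` is an antichain of the poset `P` on `Fin d`. -/
def IsPosetAntichain (P : PartialOrder (Fin d)) (A : Finset (Fin d)) : Prop :=
  ∀ i ∈ A, ∀ j ∈ A, i ≠ j → ¬ P.lt i j ∧ ¬ P.lt j i

/-- The chain polytope of a poset on `Fin d`. -/
def chainPoly (P : PartialOrder (Fin d)) : Set (Fin d → ℝ) :=
  convexHull ℝ {x | ∃ A : Finset (Fin d), IsPosetAntichain P A ∧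
    x = fun i => if i ∈ A then (1 : ℝ) else 0}

/-- The enriched chain polytope `C_P^(e) = (C_P)^±`. -/
def enrichedChainPoly (P : PartialOrder (Fin d)) : Set (Fin d → ℝ) := uncond (chainPoly P)

/-- The twinned chain polytope `C_{P,Q} = conv(C_P ∪ -C_Q)`. -/
def twinnedChainPoly (P Q : PartialOrder (Fin d)) : Set (Fin d → ℝ) :=
  convexHull ℝ (chainPoly P ∪ -(chainPoly Q))

/-- The order polytope of a poset on `Fin d`. -/
def orderPoly (P : PartialOrder (Fin d)) : Set (Fin d → ℝ) :=
  {x | (∀ i, 0 ≤ x i ∧ x i ≤ 1) ∧ ∀ i j, P.lt i j → x i ≤ x j}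

/-- A poset on `Fin d` is naturally labeled. -/
def NaturallyLabeled (P : PartialOrder (Fin d)) : Prop := ∀ i j, P.lt i j → i < j

/-- `π` (as a listing `π 0, π 1, …`) is a linear extension of `P`. -/
def IsLinearExtension (P : PartialOrder (Fin d)) (π : Fin d → Fin d) : Prop :=
  Function.Bijective π ∧ ∀ a b, P.lt (π a) (π b) → a < b

/-- The sequence of (1-based) labels of the listing `π`, with sentinel `π_0 = 0`. -/
def seqOf (π : Fin d → Fin d) (k : ℕ) : ℕ :=
  if h : 1 ≤ k ∧ k ≤ d then (π ⟨k - 1, by omega⟩).val + 1 else 0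

/-- The number of left peaks of the listing `π`. -/
def leftPeakCount (π : Fin d → Fin d) : ℕ :=
  ((Finset.Icc 1 (d - 1)).filter
    (fun i => seqOf π (i - 1) < seqOf π i ∧ seqOf π (i + 1) < seqOf π i)).card

open scoped Classical in
/-- The left peak polynomial `W_P^(ℓ)(x) = ∑_{π ∈ L(P)} x^{pk^(ℓ)(π)}`. -/
noncomputable def leftPeakPoly (P : PartialOrder (Fin d)) : Polynomial ℝ :=
  ∑ π : Equiv.Perm (Fin d),
    if IsLinearExtension P (π : Fin d → Fin d) then
      Polynomial.X ^ leftPeakCount (π : Fin d → Fin d) else 0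

/-- The strict order of the ordinal sum `P_I ⊕ Q_{Iᶜ}` of induced subposets. -/
def ordinalSumLt (P Q : PartialOrder (Fin d)) (I : Set (Fin d)) (i j : Fin d) : Prop :=
  (i ∈ I ∧ j ∈ I ∧ P.lt i j) ∨ (i ∉ I ∧ j ∉ I ∧ Q.lt i j) ∨ (i ∈ I ∧ j ∉ I)

/-- The polynomial `(x+1)^d f(4x/(x+1)^2)` (for `deg f ≤ d/2`). -/
noncomputable def gammaSub (d : ℕ) (f : Polynomial ℝ) : Polynomial ℝ :=
  ∑ k ∈ Finset.range (d + 1),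
    Polynomial.C (f.coeff k * 4 ^ k) * Polynomial.X ^ k * (1 + Polynomial.X) ^ (d - 2 * k)

/-- The Cayley sum `X * Y ⊂ ℝ^{d+1}`. -/
def cayleySum (X Y : Set (Fin d → ℝ)) : Set (Fin (d + 1) → ℝ) :=
  convexHull ℝ ({z | ∃ x ∈ X, z = Fin.snoc x 0} ∪ {z | ∃ y ∈ Y, z = Fin.snoc y 1})

/-- `Ω(X, Y) = conv((X × {1}) ∪ (−Y × {−1})) ⊂ ℝ^{d+1}`. -/
def omegaSum (X Y : Set (Fin d → ℝ)) : Set (Fin (d + 1) → ℝ) :=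
  convexHull ℝ ({z | ∃ x ∈ X, z = Fin.snoc x 1} ∪ {z | ∃ y ∈ Y, z = -(Fin.snoc y 1)})

/-- `Γ(X, Y) = conv(X ∪ (−Y))`. -/
def gammaSum (X Y : Set (Fin d → ℝ)) : Set (Fin d → ℝ) :=
  convexHull ℝ (X ∪ -Y)

/-- Enriched `(P,Q)`-partition. -/
def IsEnrichedPQPartition (P Q : PartialOrder (Fin d)) (f : Fin d → ℤ) : Prop :=
  (∀ x y, P.lt x y → 0 ≤ f x → 0 ≤ f y → f x ≤ f y) ∧
  (∀ x y, Q.lt x y → f x ≤ 0 → f y ≤ 0 → f y ≤ f x)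

/-- `M(f) = max({0} ∪ f([d]))`. -/
def maxVal (f : Fin d → ℤ) : ℤ :=
  (insert 0 (Finset.image f Finset.univ)).max' (Finset.insert_nonempty _ _)

/-- `m(f) = min({0} ∪ f([d]))`. -/
def minVal (f : Fin d → ℤ) : ℤ :=
  (insert 0 (Finset.image f Finset.univ)).min' (Finset.insert_nonempty _ _)

/-- The number of enriched `(P,Q)`-partitions `f` with `M(f) - m(f) ≤ m`. -/
noncomputable def OmegaPQ (P Q : PartialOrder (Fin d)) (m : ℕ) : ℕ :=
  Set.ncard {f : Fin d → ℤ | IsEnrichedPQPartition P Q f ∧ maxVal f - minVal f ≤ (m : ℤ)}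

end Posets

section Faces

variable [Fintype V]

/-- `F` is a face of `P` (cut out by a supporting linear functional). -/
def IsFace (P F : Set (V → ℝ)) : Prop :=
  ∃ (c : V → ℝ) (b : ℝ), (∀ x ∈ P, ∑ i, c i * x i ≤ b) ∧ F = {x ∈ P | ∑ i, c i * x i = b}

/-- `F` is a facet of `P`: a face of dimension `dim P - 1`. -/
def IsFacet (P F : Set (V → ℝ)) : Prop :=
  IsFace P F ∧ polyDim F + 1 = polyDim P

/-- `F` is a simplex: the convex hull of affinely independent points. -/
def IsSimplexSet (F : Set (V → ℝ)) : Prop :=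
  ∃ S : Finset (V → ℝ), AffineIndependent ℝ (fun v : S => (v : V → ℝ)) ∧
    F = convexHull ℝ (S : Set (V → ℝ))

end Faces

end ABP

/-! Sending `(ε, y)` to `(signs of y, ε |y|)` (with the signs of `ε` kept where `y` vanishes)
is an involution of `{-1,1}^d × ℤ^d`; it matches the lattice points of `m P_ε^±` with pairs
(sign vector, lattice point of `m P`), because `P` and `P_ε^±` agree on the orthant of `ε`. Hence
`∑_ε L_{P_ε^±}(m) = 2^d L_P(m)`, and multiplying the Ehrhart series by `(1 - x)^{d+1}` gives the
identity of `h^*`-polynomials.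

The γ-expansions of the `h^*(P_ε^±)` can be averaged once they all have degree `d`. Since
`P_ε^±` is centrally symmetric and contains `0`, each `L_{P_ε^±}(m)` is odd, so
`h^*(P_ε^±) ≡ (1 + x)^d` modulo `2`: its coefficient of `x^d` is odd, and its coefficients
beyond `x^d` are even, whereas a γ-positive polynomial has leading coefficient `h^*(0) = 1`. -/

namespace ABP

section Unconditional

variable {V : Type*}

lemma signVec_mul_signVec_mul (ε : V → Bool) (i : V) (t : ℝ) :
    signVec ε i * (signVec ε i * t) = t := by
  unfold signVec; cases ε i <;> simp

lemma abs_signVec_mul (ε : V → Bool) (i : V) (t : ℝ) : |signVec ε i * t| = |t| := by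
  unfold signVec; cases ε i <;> simp

lemma signVec_mul_abs_mem_orthant (ε : V → Bool) (y : V → ℝ) : signVec ε * |y| ∈ orthant ε :=
  fun i => by rw [Pi.mul_apply, signVec_mul_signVec_mul]; exact abs_nonneg (y i)

lemma subset_uncond (Q : Set (V → ℝ)) : Q ⊆ uncond Q :=
  fun x hx => ⟨fun _ => true, x, hx, funext fun i => by simp [signVec]⟩

lemma uncond_empty : uncond (∅ : Set (V → ℝ)) = ∅ :=
  Set.eq_empty_of_forall_notMem fun _ ⟨_, _, hx, _⟩ => hx

lemma mem_uncond_iff_abs_mem {Q : Set (V → ℝ)} (hQ : ∀ x ∈ Q, ∀ i, 0 ≤ x i) {y : V → ℝ} :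
    y ∈ uncond Q ↔ |y| ∈ Q := by
  constructor
  · rintro ⟨ε, x, hx, rfl⟩
    convert hx using 1
    funext i
    rw [Pi.abs_apply, Pi.mul_apply, abs_signVec_mul, abs_of_nonneg (hQ x hx i)]
  · intro hy
    refine ⟨fun i => decide (0 ≤ y i), |y|, hy, funext fun i => ?_⟩
    by_cases h : 0 ≤ y i
    · simp [signVec, h, abs_of_nonneg h]
    · simp [signVec, h, abs_of_neg (not_le.mp h)]

lemma neg_mem_uncond {Q : Set (V → ℝ)} {y : V → ℝ} (hy : y ∈ uncond Q) : -y ∈ uncond Q := by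
  obtain ⟨ε, x, hx, rfl⟩ := hy
  refine ⟨fun i => !ε i, x, hx, funext fun i => ?_⟩
  rcases Bool.eq_false_or_eq_true (ε i) with h | h <;> simp [signVec, h]

lemma smul_uncond (c : ℝ) (Q : Set (V → ℝ)) : c • uncond Q = uncond (c • Q) := by
  ext y
  constructor
  · rintro ⟨_, ⟨ε, x, hx, rfl⟩, rfl⟩
    exact ⟨ε, c • x, Set.smul_mem_smul_set hx, (mul_smul_comm c _ x).symm⟩
  · rintro ⟨ε, _, ⟨x, hx, rfl⟩, rfl⟩
    exact ⟨signVec ε * x, ⟨ε, x, hx, rfl⟩, (mul_smul_comm c _ x).symm⟩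

lemma smul_orthant {c : ℝ} (hc : 0 < c) (ε : V → Bool) : c • orthant ε = orthant ε := by
  ext x
  rw [Set.mem_smul_set_iff_inv_smul_mem₀ hc.ne']
  refine forall_congr' fun i => ?_
  rw [Pi.smul_apply, smul_eq_mul, mul_left_comm]
  exact mul_nonneg_iff_of_pos_left (inv_pos.mpr hc)

lemma forall_mem_smul_nonneg {c : ℝ} (hc : 0 ≤ c) {S : Set (V → ℝ)}
    (hS : ∀ x ∈ S, ∀ i, 0 ≤ x i) : ∀ x ∈ c • S, ∀ i, 0 ≤ x i := by
  rintro _ ⟨x, hx, rfl⟩ i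
  exact mul_nonneg hc (hS x hx i)

lemma IsAntiBlocking.zero_mem {Q : Set (V → ℝ)} (hQ : IsAntiBlocking Q) (hne : Q.Nonempty) :
    0 ∈ Q := by
  obtain ⟨y, hy⟩ := hne
  exact hQ.2 y hy 0 fun i => ⟨le_rfl, hQ.1 y hy i⟩

variable {P : Set (V → ℝ)} {Q : (V → Bool) → Set (V → ℝ)}

lemma smul_inter_orthant {c : ℝ} (hc : 0 < c) {ε : V → Bool}
    (hPQ : P ∩ orthant ε = uncond (Q ε) ∩ orthant ε) :
    c • P ∩ orthant ε = uncond (c • Q ε) ∩ orthant ε := by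
  rw [← smul_uncond, ← smul_orthant hc ε, ← Set.smul_set_inter₀ hc.ne',
    ← Set.smul_set_inter₀ hc.ne', hPQ]

lemma mem_uncond_iff_signVec_mul_abs_mem (hQ : ∀ ε, ∀ x ∈ Q ε, ∀ i, 0 ≤ x i)
    (hPQ : ∀ ε, P ∩ orthant ε = uncond (Q ε) ∩ orthant ε) (ε : V → Bool) (y : V → ℝ) :
    y ∈ uncond (Q ε) ↔ signVec ε * |y| ∈ P := by
  have horth := signVec_mul_abs_mem_orthant ε y
  have habs : abs (signVec ε * |y|) = |y| := funext fun i => by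
    simp only [Pi.abs_apply, Pi.mul_apply, abs_signVec_mul, abs_abs]
  calc y ∈ uncond (Q ε) ↔ signVec ε * |y| ∈ uncond (Q ε) := by
        rw [mem_uncond_iff_abs_mem (hQ ε), mem_uncond_iff_abs_mem (hQ ε), habs]
    _ ↔ signVec ε * |y| ∈ uncond (Q ε) ∩ orthant ε := (and_iff_left horth).symm
    _ ↔ signVec ε * |y| ∈ P := by rw [← hPQ, Set.mem_inter_iff, and_iff_left horth]

end Unconditional

section LatticePoints

variable {V : Type*}

def latticePoints (S : Set (V → ℝ)) : Set (V → ℤ) := (fun x i => (x i : ℝ)) ⁻¹' S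

def signFlip (p : (V → Bool) × (V → ℤ)) : (V → Bool) × (V → ℤ) :=
  (fun i => if p.2 i = 0 then p.1 i else decide (0 < p.2 i),
    fun i => if p.1 i then |p.2 i| else -|p.2 i|)

lemma signFlip_involutive : Function.Involutive (signFlip (V := V)) := by
  rintro ⟨ε, y⟩
  refine Prod.ext (funext fun i => ?_) (funext fun i => ?_) <;>
    simp only [signFlip] <;> split_ifs <;> simp_all [abs_eq_max_neg] <;> omega

lemma cast_signFlip_snd (p : (V → Bool) × (V → ℤ)) :
    (fun i => ((signFlip p).2 i : ℝ)) = signVec p.1 * |fun i => (p.2 i : ℝ)| := by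
  funext i
  simp only [signFlip, signVec, Pi.mul_apply, Pi.abs_apply]
  cases p.1 i <;> simp

variable {P : Set (V → ℝ)} {Q : (V → Bool) → Set (V → ℝ)}

def sigmaLatticePointsUncondEquiv (hQ : ∀ ε, ∀ x ∈ Q ε, ∀ i, 0 ≤ x i)
    (hPQ : ∀ ε, P ∩ orthant ε = uncond (Q ε) ∩ orthant ε) :
    (Σ ε, latticePoints (uncond (Q ε))) ≃ Σ _ : V → Bool, latticePoints P :=
  (Equiv.subtypeProdEquivSigmaSubtype fun ε y => y ∈ latticePoints (uncond (Q ε))).symm.trans <|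
    ((signFlip_involutive.toPerm _).subtypeEquiv fun p => by
      simp only [latticePoints, Set.mem_preimage, Function.Involutive.coe_toPerm,
        cast_signFlip_snd]
      exact mem_uncond_iff_signVec_mul_abs_mem hQ hPQ p.1 _).trans <|
    Equiv.subtypeProdEquivSigmaSubtype fun _ z => z ∈ latticePoints P

variable [Fintype V]

lemma latticeCount_eq_ncard (P : Set (V → ℝ)) (m : ℕ) :
    latticeCount P m = (latticePoints ((m : ℝ) • P)).ncard := rfl

lemma finite_latticePoints_of_isBounded {S : Set (V → ℝ)}
    (hS : Bornology.IsBounded S) : (latticePoints S).Finite := by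
  have hcast : Isometry fun (x : V → ℤ) i => (x i : ℝ) :=
    Isometry.piMap _ fun _ => Real.isometry_intCast
  have := Metric.finite_isBounded_inter_isClosed DiscreteTopology.isDiscrete
    (hcast.antilipschitz.isBounded_preimage hS) isClosed_univ
  rwa [Set.inter_univ] at this

lemma IsLatticePolytope.finite_latticePoints_smul {P : Set (V → ℝ)}
    (hP : IsLatticePolytope P) (c : ℝ) : (latticePoints (c • P)).Finite := by
  obtain ⟨S, -, rfl⟩ := hP
  exact finite_latticePoints_of_isBounded
    ((isBounded_convexHull.mpr S.finite_toSet.isBounded).smul₀ c)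

lemma finite_latticePoints_uncond (hQ : ∀ ε, ∀ x ∈ Q ε, ∀ i, 0 ≤ x i)
    (hPQ : ∀ ε, P ∩ orthant ε = uncond (Q ε) ∩ orthant ε) (hP : (latticePoints P).Finite)
    (ε : V → Bool) : (latticePoints (uncond (Q ε))).Finite := by
  have := hP.to_subtype
  have := Finite.of_equiv _ (sigmaLatticePointsUncondEquiv hQ hPQ).symm
  exact Set.finite_coe_iff.mp (Finite.of_injective
    (Sigma.mk (β := fun ε => latticePoints (uncond (Q ε))) ε) sigma_mk_injective)

lemma finite_latticePoints_smul_uncond (hP : IsLatticePolytope P)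
    (hQ : ∀ ε, ∀ x ∈ Q ε, ∀ i, 0 ≤ x i) (hPQ : ∀ ε, P ∩ orthant ε = uncond (Q ε) ∩ orthant ε)
    {c : ℝ} (hc : 0 < c) (ε : V → Bool) : (latticePoints (c • uncond (Q ε))).Finite := by
  rw [smul_uncond]
  exact finite_latticePoints_uncond (fun ε => forall_mem_smul_nonneg hc.le (hQ ε))
    (fun ε => smul_inter_orthant hc (hPQ ε)) (hP.finite_latticePoints_smul c) ε

variable [DecidableEq V]

lemma sum_ncard_latticePoints_uncond (hQ : ∀ ε, ∀ x ∈ Q ε, ∀ i, 0 ≤ x i)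
    (hPQ : ∀ ε, P ∩ orthant ε = uncond (Q ε) ∩ orthant ε) (hP : (latticePoints P).Finite) :
    ∑ ε, (latticePoints (uncond (Q ε))).ncard =
      2 ^ Fintype.card V * (latticePoints P).ncard := by
  have := hP.to_subtype
  have := fun ε => (finite_latticePoints_uncond hQ hPQ hP ε).to_subtype
  simp_rw [← Nat.card_coe_set_eq]
  rw [← Nat.card_sigma, Nat.card_congr (sigmaLatticePointsUncondEquiv hQ hPQ), Nat.card_sigma,
    Finset.sum_const, Finset.card_univ, Fintype.card_fun, Fintype.card_bool, smul_eq_mul]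

lemma sum_latticeCount_uncond (hP : IsLatticePolytope P)
    (hQ : ∀ ε, ∀ x ∈ Q ε, ∀ i, 0 ≤ x i) (hPQ : ∀ ε, P ∩ orthant ε = uncond (Q ε) ∩ orthant ε)
    {m : ℕ} (hm : m ≠ 0) :
    ∑ ε, latticeCount (uncond (Q ε)) m = 2 ^ Fintype.card V * latticeCount P m := by
  have hc : (0 : ℝ) < m := by positivity
  simp only [latticeCount_eq_ncard, smul_uncond]
  exact sum_ncard_latticePoints_uncond (fun ε => forall_mem_smul_nonneg hc.le (hQ ε))
    (fun ε => smul_inter_orthant hc (hPQ ε)) (hP.finite_latticePoints_smul _)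

end LatticePoints

section Parity

lemma odd_ncard_of_neg_mem {G : Type*} [AddGroup G] [IsAddTorsionFree G] {S : Set G}
    (hS : S.Finite) (h0 : 0 ∈ S) (hneg : ∀ x ∈ S, -x ∈ S) : Odd S.ncard := by
  classical
  rw [Set.ncard_eq_toFinset_card S hS, ← Finset.card_erase_add_one (hS.mem_toFinset.mpr h0)]
  refine Even.add_one ?_
  rw [← ZMod.natCast_eq_zero_iff_even, Finset.cast_card]
  -- negation pairs off the nonzero points, and `1 + 1 = 0` in `ZMod 2`
  refine Finset.sum_involution (fun x _ => -x) (fun _ _ => by decide) ?_ ?_ fun x _ => neg_neg x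
  · intro x hx _ hneg_eq
    exact (Finset.mem_erase.mp hx).1 (self_eq_neg.mp hneg_eq.symm)
  · intro x hx
    obtain ⟨hx0, hxS⟩ := Finset.mem_erase.mp hx
    exact Finset.mem_erase.mpr ⟨neg_ne_zero.mpr hx0, hS.mem_toFinset.mpr
      (hneg x (hS.mem_toFinset.mp hxS))⟩

lemma odd_latticeCount_uncond {V : Type*} [Fintype V] {Q : Set (V → ℝ)} (h0 : 0 ∈ Q) {m : ℕ}
    (hfin : (latticePoints ((m : ℝ) • uncond Q)).Finite) :
    Odd (latticeCount (uncond Q) m) := by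
  refine odd_ncard_of_neg_mem hfin ?_ fun x hx => ?_
  · simpa [latticePoints, ← Pi.zero_def] using
      Set.smul_mem_smul_set (a := (m : ℝ)) (subset_uncond Q h0)
  · rw [smul_uncond] at hx ⊢
    simpa [latticePoints, ← Pi.neg_def] using neg_mem_uncond hx

/-- Modulo `2`, a series with odd coefficients is `1 / (1 - X)`. -/
lemma coeff_modTwo_of_odd {a : ℕ → ℕ} (ha : ∀ m, Odd (a m)) {n : ℕ} {f : ℝ[X]}
    (hf : PowerSeries.mk (fun m => (a m : ℝ)) * (1 - PowerSeries.X) ^ (n + 1) =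
      (f : PowerSeries ℝ)) (k : ℕ) :
    ∃ z : ℤ, f.coeff k = z ∧ (z : ZMod 2) = n.choose k := by
  set B : PowerSeries ℤ := PowerSeries.mk (fun m => (a m : ℤ)) * (1 - PowerSeries.X) ^ (n + 1)
  refine ⟨PowerSeries.coeff k B, ?_, ?_⟩
  · have hBf : PowerSeries.map (Int.castRingHom ℝ) B = f := by
      rw [← hf]
      simp only [B, map_mul, map_pow, map_sub, map_one, PowerSeries.map_X]
      congr 1
    rw [← Polynomial.coeff_coe, ← hBf, PowerSeries.coeff_map, eq_intCast]
  · have hB2 : PowerSeries.map (Int.castRingHom (ZMod 2)) B = ((1 + X) ^ n : (ZMod 2)[X]) := by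
      have hmk : PowerSeries.map (Int.castRingHom (ZMod 2)) (PowerSeries.mk fun m => (a m : ℤ))
          = PowerSeries.mk 1 := by
        ext m
        simp [(ha m).natCast_zmod_two]
      rw [← CharTwo.sub_eq_add, Polynomial.coe_pow, Polynomial.coe_sub, Polynomial.coe_one,
        Polynomial.coe_X]
      simp only [B, map_mul, map_pow, map_sub, map_one, PowerSeries.map_X, hmk, pow_succ',
        ← mul_assoc, PowerSeries.mk_one_mul_one_sub_eq_one, one_mul]
    rw [← eq_intCast (Int.castRingHom (ZMod 2)), ← PowerSeries.coeff_map, hB2,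
      Polynomial.coeff_coe, Polynomial.coeff_one_add_X_pow]

lemma natDegree_eq_of_coeff_modTwo {n : ℕ} {f : ℝ[X]}
    (hf : ∀ k, ∃ z : ℤ, f.coeff k = z ∧ (z : ZMod 2) = n.choose k)
    (htop : f.coeff f.natDegree = 1) : f.natDegree = n := by
  obtain ⟨z, hz, hzn⟩ := hf n
  have hle : n ≤ f.natDegree := by
    refine le_natDegree_of_ne_zero fun hzero => ?_
    rw [hzero, eq_comm, Int.cast_eq_zero] at hz
    rw [hz, Nat.choose_self] at hzn
    exact absurd hzn (by decide)
  obtain ⟨w, hw, hwn⟩ := hf f.natDegree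
  have hge : ¬ n < f.natDegree := fun hlt => by
    rw [htop, eq_comm, Int.cast_eq_one] at hw
    rw [hw, Nat.choose_eq_zero_of_lt hlt] at hwn
    exact absurd hwn (by decide)
  omega

end Parity

section EhrhartSeries

variable {V : Type*} [Fintype V]

noncomputable def ehrhartSeries (P : Set (V → ℝ)) : PowerSeries ℝ :=
  PowerSeries.mk fun m => if m = 0 then 1 else (latticeCount P m : ℝ)

lemma isHStar_iff {P : Set (V → ℝ)} {h : ℝ[X]} :
    IsHStar P h ↔
      ehrhartSeries P * (1 - PowerSeries.X : PowerSeries ℝ) ^ (polyDim P + 1) = h :=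
  Iff.rfl

lemma polyDim_uncond {Q : Set (V → ℝ)} (hQ : polyDim Q = Fintype.card V) :
    polyDim (uncond Q) = Fintype.card V :=
  le_antisymm ((Submodule.finrank_le _).trans_eq (Module.finrank_fintype_fun_eq_card ℝ))
    (hQ ▸ Submodule.finrank_mono (vectorSpan_mono ℝ (subset_uncond Q)))

lemma IsHStar.coeff_zero {P : Set (V → ℝ)} {f : ℝ[X]} (hf : IsHStar P f) : f.coeff 0 = 1 := by
  have := congrArg (PowerSeries.coeff 0) (isHStar_iff.mp hf)
  simpa [ehrhartSeries, PowerSeries.coeff_zero_eq_constantCoeff] using this.symm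

lemma IsHStar.eq_one_sub_X_of_empty {f : ℝ[X]} (hf : IsHStar (∅ : Set (V → ℝ)) f) :
    f = 1 - X := by
  have hseries : ehrhartSeries (∅ : Set (V → ℝ)) = 1 := by
    ext m
    simp [ehrhartSeries, latticeCount, PowerSeries.coeff_one]
  have hdim : polyDim (∅ : Set (V → ℝ)) = 0 := by simp [polyDim]
  rw [isHStar_iff, hseries, hdim, zero_add, pow_one, one_mul] at hf
  exact Polynomial.coe_inj.mp (by simpa using hf.symm)

lemma IsHStar.natDegree_eq_of_odd {P : Set (V → ℝ)} {f : ℝ[X]} (hf : IsHStar P f) {n : ℕ}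
    (hdim : polyDim P = n) (hodd : ∀ m ≠ 0, Odd (latticeCount P m))
    (htop : f.coeff f.natDegree = f.coeff 0) : f.natDegree = n := by
  have hseries : ehrhartSeries P =
      PowerSeries.mk fun m => ((if m = 0 then 1 else latticeCount P m : ℕ) : ℝ) := by
    simp only [ehrhartSeries, Nat.cast_ite, Nat.cast_one]
  have hf0 := hf.coeff_zero
  rw [isHStar_iff, hseries, hdim] at hf
  refine natDegree_eq_of_coeff_modTwo (coeff_modTwo_of_odd (fun m => ?_) hf) ?_
  · split_ifs with hm
    exacts [odd_one, hodd m hm]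
  · rw [htop, hf0]

variable [DecidableEq V] {P : Set (V → ℝ)} {Q : (V → Bool) → Set (V → ℝ)}

lemma sum_ehrhartSeries_uncond (hP : IsLatticePolytope P)
    (hQ : ∀ ε, ∀ x ∈ Q ε, ∀ i, 0 ≤ x i) (hPQ : ∀ ε, P ∩ orthant ε = uncond (Q ε) ∩ orthant ε) :
    ∑ ε, ehrhartSeries (uncond (Q ε)) =
      PowerSeries.C ((2 : ℝ) ^ Fintype.card V) * ehrhartSeries P := by
  ext m
  simp only [ehrhartSeries, map_sum, PowerSeries.coeff_C_mul, PowerSeries.coeff_mk]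
  split_ifs with hm
  · simp
  · exact_mod_cast sum_latticeCount_uncond hP hQ hPQ hm

lemma sum_hStar_uncond {n : ℕ} (hP : IsLatticePolytope P) (hdim : polyDim P = n)
    (hQ : ∀ ε, ∀ x ∈ Q ε, ∀ i, 0 ≤ x i) (hPQ : ∀ ε, P ∩ orthant ε = uncond (Q ε) ∩ orthant ε)
    (hQdim : ∀ ε, polyDim (uncond (Q ε)) = n) {h : ℝ[X]} (hh : IsHStar P h)
    {g : (V → Bool) → ℝ[X]} (hg : ∀ ε, IsHStar (uncond (Q ε)) (g ε)) :
    ∑ ε, g ε = C ((2 : ℝ) ^ Fintype.card V) * h := by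
  apply Polynomial.coe_inj.mp
  rw [← coeToPowerSeries.ringHom_apply, map_sum]
  simp only [coeToPowerSeries.ringHom_apply, coe_mul, coe_C]
  simp only [isHStar_iff, hQdim, hdim] at hg hh
  simp_rw [← hg, ← hh, ← Finset.sum_mul, sum_ehrhartSeries_uncond hP hQ hPQ, mul_assoc]

end EhrhartSeries

section Gamma

noncomputable def gammaPoly (n : ℕ) (γ : ℕ → ℝ) : ℝ[X] :=
  ∑ i ∈ Finset.range (n / 2 + 1), C (γ i) * X ^ i * (1 + X) ^ (n - 2 * i)

lemma gammaPositive_iff {f : ℝ[X]} :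
    GammaPositive f ↔ ∃ γ : ℕ → ℝ, (∀ i, 0 ≤ γ i) ∧ f = gammaPoly f.natDegree γ := Iff.rfl

variable {n : ℕ} {γ : ℕ → ℝ}

lemma coeff_gammaPoly_zero : (gammaPoly n γ).coeff 0 = γ 0 := by
  rw [gammaPoly, finsetSum_coeff, Finset.sum_eq_single_of_mem 0 (by simp)]
  · simp [coeff_one_add_X_pow]
  · intro i _ hi
    rw [mul_comm (C _), mul_assoc, coeff_X_pow_mul', if_neg (by omega)]

lemma coeff_gammaPoly_self : (gammaPoly n γ).coeff n = γ 0 := by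
  rw [gammaPoly, finsetSum_coeff, Finset.sum_eq_single_of_mem 0 (by simp)]
  · simp [coeff_one_add_X_pow]
  · intro i hi hi0
    have : 2 * i ≤ n := by have := Finset.mem_range.mp hi; omega
    rw [mul_comm (C _), mul_assoc, coeff_X_pow_mul', if_pos (by omega), coeff_C_mul,
      coeff_one_add_X_pow, Nat.choose_eq_zero_of_lt (by omega), Nat.cast_zero, mul_zero]

lemma natDegree_gammaPoly_le : (gammaPoly n γ).natDegree ≤ n := by
  refine natDegree_sum_le_of_forall_le _ _ fun i hi => ?_
  have : 2 * i ≤ n := by have := Finset.mem_range.mp hi; omega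
  calc (C (γ i) * X ^ i * (1 + X) ^ (n - 2 * i)).natDegree
      ≤ i + (n - 2 * i) := by
        refine natDegree_mul_le_of_le (natDegree_C_mul_le _ _ |>.trans (natDegree_X_pow_le i))
          (natDegree_pow_le_of_le _ ?_) |>.trans (by rw [mul_one])
        exact natDegree_add_le_of_degree_le (natDegree_one.le.trans (Nat.zero_le _))
          natDegree_X_le
    _ ≤ n := by omega

lemma natDegree_gammaPoly (h0 : γ 0 ≠ 0) : (gammaPoly n γ).natDegree = n :=
  natDegree_gammaPoly_le.antisymm (le_natDegree_of_ne_zero (coeff_gammaPoly_self ▸ h0))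

lemma sum_gammaPoly {ι : Type*} (s : Finset ι) (γ : ι → ℕ → ℝ) :
    ∑ j ∈ s, gammaPoly n (γ j) = gammaPoly n (∑ j ∈ s, γ j) := by
  simp only [gammaPoly, Finset.sum_apply, map_sum, Finset.sum_mul]
  exact Finset.sum_comm

lemma C_mul_gammaPoly (c : ℝ) : C c * gammaPoly n γ = gammaPoly n (c • γ) := by
  simp only [gammaPoly, Finset.mul_sum, Pi.smul_apply, smul_eq_mul, C_mul, mul_assoc]

lemma gammaPositive_gammaPoly (hγ : ∀ i, 0 ≤ γ i) (h0 : γ 0 ≠ 0) :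
    GammaPositive (gammaPoly n γ) :=
  ⟨γ, hγ, by rw [natDegree_gammaPoly h0]; rfl⟩

lemma GammaPositive.coeff_natDegree {f : ℝ[X]} (hf : GammaPositive f) :
    f.coeff f.natDegree = f.coeff 0 := by
  obtain ⟨γ, -, hγ⟩ := gammaPositive_iff.mp hf
  set n := f.natDegree
  rw [hγ, coeff_gammaPoly_self, coeff_gammaPoly_zero]

lemma not_gammaPositive_one_sub_X : ¬ GammaPositive (1 - X : ℝ[X]) := by
  intro h
  have := h.coeff_natDegree
  rw [show (1 - X : ℝ[X]).natDegree = 1 by compute_degree!] at this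
  norm_num [coeff_one, coeff_X] at this

/-- `GammaPositive` expands in degree `natDegree`, so the nonzero constant coefficient is what
keeps the degree of the combination equal to `n`. -/
lemma GammaPositive.C_mul_sum {ι : Type*} (s : Finset ι) {f : ι → ℝ[X]}
    (hf : ∀ j ∈ s, GammaPositive (f j)) (hdeg : ∀ j ∈ s, (f j).natDegree = n) {c : ℝ}
    (hc : 0 ≤ c) (h0 : (C c * ∑ j ∈ s, f j).coeff 0 ≠ 0) :
    GammaPositive (C c * ∑ j ∈ s, f j) := by
  choose! γ hγ hfγ using fun j hj => hdeg j hj ▸ gammaPositive_iff.mp (hf j hj)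
  rw [Finset.sum_congr rfl hfγ, sum_gammaPoly, C_mul_gammaPoly] at h0 ⊢
  refine gammaPositive_gammaPoly (fun i => ?_) (by rwa [coeff_gammaPoly_zero] at h0)
  simp only [Pi.smul_apply, Finset.sum_apply, smul_eq_mul]
  exact mul_nonneg hc (Finset.sum_nonneg fun j hj => hγ j hj i)

end Gamma

end ABP

open ABP

theorem hstar_locally_anti_blocking_general {d : ℕ} (P : Set (Fin d → ℝ))
    (hlat : IsLatticePolytope P) (hdim : polyDim P = d)
    (Pε : (Fin d → Bool) → Set (Fin d → ℝ))
    (hεab : ∀ ε, IsAntiBlocking (Pε ε))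
    (hεdim : ∀ ε, polyDim (Pε ε) = d)
    (hεint : ∀ ε, P ∩ orthant ε = uncond (Pε ε) ∩ orthant ε)
    (h : Polynomial ℝ) (hh : IsHStar P h)
    (hε : (Fin d → Bool) → Polynomial ℝ)
    (hhε : ∀ ε, IsHStar (uncond (Pε ε)) (hε ε)) :
    (h = Polynomial.C (((2 : ℝ) ^ d)⁻¹) * ∑ ε : Fin d → Bool, hε ε) ∧
      ((∀ ε, GammaPositive (hε ε)) → GammaPositive h) := by
  have hpos ε : ∀ x ∈ Pε ε, ∀ i, 0 ≤ x i := (hεab ε).1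
  have hεdim_uncond ε : polyDim (uncond (Pε ε)) = d := by
    simpa using polyDim_uncond ((hεdim ε).trans (Fintype.card_fin d).symm)
  have hsum : ∑ ε, hε ε = C ((2 : ℝ) ^ d) * h := by
    simpa using sum_hStar_uncond hlat hdim hpos hεint hεdim_uncond hh hhε
  have hmain : h = C ((2 : ℝ) ^ d)⁻¹ * ∑ ε, hε ε := by
    rw [hsum, ← mul_assoc, ← C_mul, inv_mul_cancel₀ (by positivity), C_1, one_mul]
  refine ⟨hmain, fun hγ => ?_⟩
  have hdeg ε : (hε ε).natDegree = d := by
    obtain hemp | hne := (Pε ε).eq_empty_or_nonempty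
    · have hhε' := hhε ε
      rw [hemp, uncond_empty] at hhε'
      exact absurd (hhε'.eq_one_sub_X_of_empty ▸ hγ ε) not_gammaPositive_one_sub_X
    · refine (hhε ε).natDegree_eq_of_odd (hεdim_uncond ε) (fun m hm => ?_) (hγ ε).coeff_natDegree
      exact odd_latticeCount_uncond ((hεab ε).zero_mem hne)
        (finite_latticePoints_smul_uncond hlat hpos hεint (by positivity) ε)
  rw [hmain]
  refine GammaPositive.C_mul_sum _ (fun ε _ => hγ ε) (fun ε _ => hdeg ε) (by positivity) ?_
  rw [← hmain, hh.coeff_zero]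
  exact one_ne_zero

/-- Theorem: h* of locally anti-blocking polytopes.
If `P ⊂ ℝ^d` is a locally anti-blocking lattice polytope of dimension `d`, realized on each
orthant by the anti-blocking polytope `Pε`, then
`h*(P,x) = (1/2^d) ∑_ε h*(Pε^±, x)`; in particular `h*(P,x)` is γ-positive whenever all
`h*(Pε^±, x)` are. -/
theorem hstar_locally_anti_blocking {d : ℕ} (P : Set (Fin d → ℝ))
    (hlat : IsLatticePolytope P) (hdim : polyDim P = d)
    (Pε : (Fin d → Bool) → Set (Fin d → ℝ))
    (hεlat : ∀ ε, IsLatticePolytope (Pε ε))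
    (hεab : ∀ ε, IsAntiBlocking (Pε ε))
    (hεdim : ∀ ε, polyDim (Pε ε) = d)
    (hεpos : ∀ ε, (Pε ε) ⊆ {x | ∀ i, 0 ≤ x i})
    (hεint : ∀ ε, P ∩ orthant ε = uncond (Pε ε) ∩ orthant ε)
    (h : Polynomial ℝ) (hh : IsHStar P h)
    (hε : (Fin d → Bool) → Polynomial ℝ)
    (hhε : ∀ ε, IsHStar (uncond (Pε ε)) (hε ε)) :
    (h = Polynomial.C (((2 : ℝ) ^ d)⁻¹) * ∑ ε : Fin d → Bool, hε ε) ∧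
      ((∀ ε, GammaPositive (hε ε)) → GammaPositive h) :=
  hstar_locally_anti_blocking_general P hlat hdim Pε hεab hεdim hεint h hh hε hhε
end

section
/- Let P ⊂ ℝ^d_{≥0} be an anti-blocking lattice polytope of dimension d. Then for every positive integer m, the number of lattice points of the m-th dilate of P^± satisfies L_{P^±}(m) = ∑_{j=0}^d 2^j (−1)^{d−j} ∑_{J ⊆ [d], |J| = j} L_{π_J(P)}(m), where for J = {j_1,…,j_r} ⊆ [d], π_J : ℝ^d → ℝ^r is the coordinate projection π_J(x_1,…,x_d) = (x_{j_1},…,x_{j_r}) (with π_∅ the zero map, so L_{π_∅(P)}(m) = 1). -/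
open scoped Pointwise
open Polynomial

namespace ABP

variable {V : Type*}

section AuxProof
open Finset
open scoped Classical

variable {d : ℕ}

/-- Extension by zero of a vector indexed by `Fin J.card` to `Fin d`. -/
noncomputable def extJ {α : Type*} [Zero α] (J : Finset (Fin d)) (w : Fin J.card → α) :
    Fin d → α :=
  fun i => if h : ∃ k, J.orderEmbOfFin rfl k = i then w h.choose else 0

lemma extJ_emb {α : Type*} [Zero α] (J : Finset (Fin d)) (w : Fin J.card → α) (k : Fin J.card) :
    extJ J w (J.orderEmbOfFin rfl k) = w k := by
  have h : ∃ k', J.orderEmbOfFin rfl k' = J.orderEmbOfFin rfl k := ⟨k, rfl⟩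
  have hk : h.choose = k := (J.orderEmbOfFin rfl).injective h.choose_spec
  rw [extJ, dif_pos h, hk]

lemma exists_emb_eq {J : Finset (Fin d)} {i : Fin d} (hi : i ∈ J) :
    ∃ k, J.orderEmbOfFin rfl k = i := by
  rw [← Finset.mem_coe, ← Finset.range_orderEmbOfFin J rfl] at hi
  exact hi

lemma extJ_not_mem {α : Type*} [Zero α] (J : Finset (Fin d)) (w : Fin J.card → α) {i : Fin d}
    (hi : i ∉ J) : extJ J w i = 0 := by
  have h : ¬ ∃ k, J.orderEmbOfFin rfl k = i := by
    rintro ⟨k, rfl⟩; exact hi (J.orderEmbOfFin_mem rfl k)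
  rw [extJ, dif_neg h]

lemma extJ_proj {α : Type*} [Zero α] (J : Finset (Fin d)) (z : Fin d → α)
    (hz : ∀ i ∉ J, z i = 0) : extJ J (fun k => z (J.orderEmbOfFin rfl k)) = z := by
  funext i
  by_cases hi : i ∈ J
  · obtain ⟨k, rfl⟩ := exists_emb_eq hi
    rw [extJ_emb]
  · rw [extJ_not_mem _ _ hi, hz i hi]

lemma extJ_cast (J : Finset (Fin d)) (w : Fin J.card → ℤ) :
    (fun i => ((extJ J w i : ℤ) : ℝ)) = extJ J (fun k => ((w k : ℤ) : ℝ)) := by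
  funext i
  simp only [extJ]
  split <;> simp

lemma finite_lattice_of_bounded {Q : Set (Fin d → ℝ)} (hQ : Bornology.IsBounded Q) :
    {z : Fin d → ℤ | (fun i => (z i : ℝ)) ∈ Q}.Finite := by
  obtain ⟨C, hC⟩ := isBounded_iff_forall_norm_le.mp hQ
  apply Set.Finite.subset (Set.finite_Icc (fun _ : Fin d => (-⌈C⌉ : ℤ)) fun _ => (⌈C⌉ : ℤ))
  intro z hz
  have hb : ∀ i, |(z i : ℝ)| ≤ C := by
    intro i
    have h1 : ‖(fun j => (z j : ℝ) : Fin d → ℝ) i‖ ≤ ‖(fun j => (z j : ℝ) : Fin d → ℝ)‖ :=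
      norm_le_pi_norm (fun j => (z j : ℝ) : Fin d → ℝ) i
    calc |(z i : ℝ)| = ‖(fun j => (z j : ℝ) : Fin d → ℝ) i‖ := by simp [Real.norm_eq_abs]
    _ ≤ ‖(fun j => (z j : ℝ) : Fin d → ℝ)‖ := h1
    _ ≤ C := hC _ hz
  rw [Set.mem_Icc]
  constructor <;> intro i
  · have h1 : -C ≤ (z i : ℝ) := neg_le_of_abs_le (hb i)
    have h2 : (-⌈C⌉ : ℝ) ≤ (z i : ℝ) := le_trans (by simpa using neg_le_neg (Int.le_ceil C)) h1
    exact_mod_cast h2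
  · have h1 : (z i : ℝ) ≤ C := le_of_abs_le (hb i)
    have h2 : (z i : ℝ) ≤ (⌈C⌉ : ℝ) := le_trans h1 (Int.le_ceil C)
    exact_mod_cast h2

lemma bounded_smul' {Q : Set (Fin d → ℝ)} (h : Bornology.IsBounded Q) (c : ℝ) :
    Bornology.IsBounded (c • Q) := by
  obtain ⟨C, hC⟩ := isBounded_iff_forall_norm_le.mp h
  refine isBounded_iff_forall_norm_le.mpr ⟨|c| * C, ?_⟩
  rintro y ⟨q, hq, rfl⟩
  rw [norm_smul, Real.norm_eq_abs]
  exact mul_le_mul_of_nonneg_left (hC q hq) (abs_nonneg c)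

lemma bounded_uncond {Q : Set (Fin d → ℝ)} (h : Bornology.IsBounded Q) :
    Bornology.IsBounded (uncond Q) := by
  obtain ⟨C, hC⟩ := isBounded_iff_forall_norm_le.mp h
  refine isBounded_iff_forall_norm_le.mpr ⟨max C 0, ?_⟩
  rintro y ⟨ε, x, hx, rfl⟩
  refine (pi_norm_le_iff_of_nonneg (le_max_right _ _)).mpr fun i => ?_
  have h1 : ‖(signVec ε * x) i‖ = ‖x i‖ := by
    by_cases h : ε i <;> simp [signVec, h, Pi.mul_apply, Real.norm_eq_abs, abs_mul]
  rw [h1]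
  calc ‖x i‖ ≤ ‖x‖ := norm_le_pi_norm x i
  _ ≤ C := hC x hx
  _ ≤ max C 0 := le_max_left _ _

lemma mem_uncond_iff {Q : Set (Fin d → ℝ)} (hab : IsAntiBlocking Q) {y : Fin d → ℝ} :
    y ∈ uncond Q ↔ (fun i => |y i|) ∈ Q := by
  constructor
  · rintro ⟨ε, x, hx, rfl⟩
    have h : (fun i => |(signVec ε * x) i|) = x := by
      funext i
      have h0 := hab.1 x hx i
      by_cases h : ε i <;>
        simp [signVec, h, Pi.mul_apply, abs_mul, abs_of_nonneg h0]
    rwa [h]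
  · intro h
    refine ⟨fun i => decide (0 ≤ y i), fun i => |y i|, h, ?_⟩
    funext i
    by_cases h0 : 0 ≤ y i
    · simp [signVec, Pi.mul_apply, h0, abs_of_nonneg h0]
    · simp [signVec, Pi.mul_apply, h0, abs_of_nonpos (le_of_not_ge h0)]

lemma mem_smul_uncond_iff {Q : Set (Fin d → ℝ)} (hab : IsAntiBlocking Q) {c : ℝ} (hc : 0 < c)
    {y : Fin d → ℝ} :
    y ∈ c • uncond Q ↔ (fun i => |y i|) ∈ c • Q := by
  rw [Set.mem_smul_set, Set.mem_smul_set]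
  constructor
  · rintro ⟨u, hu, rfl⟩
    refine ⟨fun i => |u i|, (mem_uncond_iff hab).mp hu, ?_⟩
    funext i
    simp [Pi.smul_apply, smul_eq_mul, abs_mul, abs_of_pos hc]
  · rintro ⟨p, hp, hyp⟩
    refine ⟨c⁻¹ • y, ?_, by funext i; simp [Pi.smul_apply, smul_eq_mul, ← mul_assoc,
      mul_inv_cancel₀ hc.ne']⟩
    apply (mem_uncond_iff hab).mpr
    have h : (fun i => |(c⁻¹ • y) i|) = p := by
      funext i
      have h2 : |y i| = c * p i := by
        have h3 := congrFun hyp i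
        simpa [Pi.smul_apply, smul_eq_mul] using h3.symm
      simp only [Pi.smul_apply, smul_eq_mul, abs_mul, abs_of_pos (inv_pos.mpr hc), h2]
      field_simp
    rwa [h]

lemma isAntiBlocking_smul {Q : Set (Fin d → ℝ)} (hab : IsAntiBlocking Q) {c : ℝ} (hc : 0 < c) :
    IsAntiBlocking (c • Q) := by
  constructor
  · rintro x ⟨p, hp, rfl⟩ i
    simpa [Pi.smul_apply, smul_eq_mul] using mul_nonneg hc.le (hab.1 p hp i)
  · rintro y ⟨p, hp, rfl⟩ x hx
    refine ⟨c⁻¹ • x, hab.2 p hp _ fun i => ?_, by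
      funext i; simp [Pi.smul_apply, smul_eq_mul, ← mul_assoc, mul_inv_cancel₀ hc.ne']⟩
    have h1 := (hx i).1
    have h2 := (hx i).2
    simp only [Pi.smul_apply, smul_eq_mul] at h1 h2 ⊢
    refine ⟨mul_nonneg (inv_pos.mpr hc).le h1, ?_⟩
    calc c⁻¹ * x i ≤ c⁻¹ * (c * p i) :=
          mul_le_mul_of_nonneg_left h2 (inv_pos.mpr hc).le
    _ = p i := by field_simp

lemma projSet_smul (J : Finset (Fin d)) (Q : Set (Fin d → ℝ)) (c : ℝ) :
    projSet J (c • Q) = c • projSet J Q := by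
  ext y
  constructor
  · rintro ⟨x, hx, rfl⟩
    obtain ⟨p, hp, rfl⟩ := hx
    exact Set.mem_smul_set.mpr ⟨fun k => p (J.orderEmbOfFin rfl k), ⟨p, hp, rfl⟩,
      by funext k; simp [Pi.smul_apply]⟩
  · intro hy
    obtain ⟨w, ⟨p, hp, rfl⟩, rfl⟩ := Set.mem_smul_set.mp hy
    exact ⟨c • p, Set.smul_mem_smul_set hp, by funext k; simp [Pi.smul_apply]⟩

lemma mem_projSet_iff {Q : Set (Fin d → ℝ)} (hab : IsAntiBlocking Q) (J : Finset (Fin d))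
    {w : Fin J.card → ℝ} : w ∈ projSet J Q ↔ extJ J w ∈ Q := by
  constructor
  · rintro ⟨x, hx, rfl⟩
    apply hab.2 x hx
    intro i
    by_cases hi : i ∈ J
    · obtain ⟨k, rfl⟩ := exists_emb_eq hi
      rw [extJ_emb]
      exact ⟨hab.1 x hx _, le_refl _⟩
    · rw [extJ_not_mem _ _ hi]
      exact ⟨le_refl 0, hab.1 x hx i⟩
  · intro h
    exact ⟨extJ J w, h, by funext k; exact extJ_emb J w k⟩

lemma latticeCount_projSet {P : Set (Fin d → ℝ)} (hab : IsAntiBlocking P) {m : ℕ} (hm : 1 ≤ m)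
    (J : Finset (Fin d))
    (hfin : {z : Fin d → ℤ | (fun i => (z i : ℝ)) ∈ (m : ℝ) • P}.Finite) :
    latticeCount (projSet J P) m
      = (hfin.toFinset.filter (fun z => ∀ i ∉ J, z i = 0)).card := by
  have hm' : (0:ℝ) < m := by exact_mod_cast hm
  have hab' := isAntiBlocking_smul hab hm'
  have key : ∀ w : Fin J.card → ℤ,
      ((fun k => (w k : ℝ)) ∈ (m : ℝ) • projSet J P ↔
        (fun i => ((extJ J w i : ℤ) : ℝ)) ∈ (m : ℝ) • P) := by
    intro w
    rw [← projSet_smul, mem_projSet_iff hab', extJ_cast]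
  have hinj : Function.Injective (fun w : Fin J.card → ℤ => extJ J w) := by
    intro w w' h
    funext k
    have h2 : extJ J w (J.orderEmbOfFin rfl k) = extJ J w' (J.orderEmbOfFin rfl k) :=
      congrFun h (J.orderEmbOfFin rfl k)
    rwa [extJ_emb, extJ_emb] at h2
  have himg : (fun w : Fin J.card → ℤ => extJ J w) ''
      {w | (fun k => (w k : ℝ)) ∈ (m : ℝ) • projSet J P}
      = ↑(hfin.toFinset.filter (fun z => ∀ i ∉ J, z i = 0)) := by
    ext z
    simp only [Set.mem_image, Set.mem_setOf_eq, Finset.coe_filter, Set.mem_setOf_eq,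
      Set.Finite.mem_toFinset]
    constructor
    · rintro ⟨w, hw, rfl⟩
      exact ⟨(key w).mp hw, fun i hi => extJ_not_mem _ _ hi⟩
    · rintro ⟨hz, hz0⟩
      have he : extJ J (fun k => z (J.orderEmbOfFin rfl k)) = z := extJ_proj J z hz0
      refine ⟨_, (key _).mpr ?_, he⟩
      simp only [he]
      exact hz
  have hnc := Set.ncard_image_of_injective
    {w : Fin J.card → ℤ | (fun k => (w k : ℝ)) ∈ (m : ℝ) • projSet J P} hinj
  rw [himg] at hnc
  rw [latticeCount, ← hnc]
  exact Set.ncard_coe_finset _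

lemma card_abs_fiber (z : Fin d → ℤ) (hz0 : ∀ i, 0 ≤ z i) (Bf : Finset (Fin d → ℤ))
    (hmem : ∀ x, x ∈ Bf ↔ ((fun i => |x i|) = z)) :
    Bf.card = 2 ^ (Finset.univ.filter (fun i => z i ≠ 0)).card := by
  rw [← Finset.card_powerset]
  refine Finset.card_bij'
    (fun x _ => (Finset.univ.filter (fun i => z i ≠ 0)).filter (fun i => x i < 0))
    (fun S _ => fun i => if i ∈ S then -z i else z i) ?_ ?_ ?_ ?_
  · intro x hx
    exact Finset.mem_powerset.mpr (Finset.filter_subset _ _)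
  · intro S hS
    rw [hmem]
    funext i
    by_cases h : i ∈ S <;> simp [h, abs_of_nonneg (hz0 i)]
  · intro x hx
    have habs : ∀ i, |x i| = z i := fun i => congrFun ((hmem x).mp hx) i
    funext i
    beta_reduce
    by_cases hc : z i ≠ 0 ∧ x i < 0
    · rw [if_pos (by simp only [Finset.mem_filter, Finset.mem_univ, true_and]; exact hc)]
      have h2 := habs i
      rw [abs_of_neg hc.2] at h2
      omega
    · rw [if_neg (by simp only [Finset.mem_filter, Finset.mem_univ, true_and]; exact hc)]
      push_neg at hc
      have h2 := habs i
      by_cases hz : z i = 0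
      · rw [hz] at h2 ⊢
        rw [abs_eq_zero] at h2
        omega
      · have hx0 : 0 ≤ x i := hc hz
        rw [abs_of_nonneg hx0] at h2
        omega
  · intro S hS
    ext i
    beta_reduce
    simp only [Finset.mem_filter, Finset.mem_univ, true_and]
    constructor
    · rintro ⟨hz, hlt⟩
      by_contra hiS
      rw [if_neg hiS] at hlt
      exact absurd hlt (not_lt.mpr (hz0 i))
    · intro hiS
      have hzi : z i ≠ 0 := by
        have h3 := Finset.mem_powerset.mp hS hiS
        simpa using h3
      refine ⟨hzi, ?_⟩
      rw [if_pos hiS]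
      have := hz0 i
      omega

lemma latticeCount_uncond_eq_sum {P : Set (Fin d → ℝ)} (hab : IsAntiBlocking P) {m : ℕ}
    (hm : 1 ≤ m) (hbd : Bornology.IsBounded P)
    (hfin : {z : Fin d → ℤ | (fun i => (z i : ℝ)) ∈ (m : ℝ) • P}.Finite) :
    latticeCount (uncond P) m
      = ∑ z ∈ hfin.toFinset, 2 ^ (Finset.univ.filter (fun i => z i ≠ 0)).card := by
  have hm' : (0:ℝ) < m := by exact_mod_cast hm
  have hfinB : {x : Fin d → ℤ | (fun i => (x i : ℝ)) ∈ (m : ℝ) • uncond P}.Finite :=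
    finite_lattice_of_bounded (bounded_smul' (bounded_uncond hbd) _)
  have hcast : ∀ x : Fin d → ℤ, (fun i => |(x i : ℝ)|) = fun i => ((|x i| : ℤ) : ℝ) := by
    intro x; funext i; push_cast; rfl
  have hBf : ∀ x : Fin d → ℤ, x ∈ hfinB.toFinset ↔ (fun i => |x i|) ∈ hfin.toFinset := by
    intro x
    rw [Set.Finite.mem_toFinset, Set.Finite.mem_toFinset, Set.mem_setOf_eq, Set.mem_setOf_eq,
      mem_smul_uncond_iff hab hm', hcast x]
  have hz0 : ∀ z ∈ hfin.toFinset, ∀ i, 0 ≤ z i := by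
    intro z hz i
    rw [Set.Finite.mem_toFinset] at hz
    obtain ⟨p, hp, hpz⟩ := hz
    have h1 : (z i : ℝ) = m * p i := by
      have h2 := congrFun hpz i
      simpa [Pi.smul_apply, smul_eq_mul] using h2.symm
    have h3 : (0:ℝ) ≤ (z i : ℝ) := by
      rw [h1]; exact mul_nonneg hm'.le (hab.1 p hp i)
    exact_mod_cast h3
  rw [latticeCount, Set.ncard_eq_toFinset_card _ hfinB]
  rw [Finset.card_eq_sum_card_fiberwise (f := fun x (i : Fin d) => |x i|) (t := hfin.toFinset)
    (fun x hx => (hBf x).mp hx)]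
  refine Finset.sum_congr rfl fun z hz => ?_
  exact card_abs_fiber z (hz0 z hz) _ (fun x => by
    rw [Finset.mem_filter]
    constructor
    · exact fun h => h.2
    · intro h
      exact ⟨(hBf x).mpr (h ▸ hz), h⟩)

lemma sum_pm (T : Finset (Fin d)) :
    ∑ K ∈ T.powerset, (2:ℤ) ^ K.card * (-1) ^ (T.card - K.card) = 1 := by
  calc ∑ K ∈ T.powerset, (2:ℤ) ^ K.card * (-1) ^ (T.card - K.card)
      = ∑ K ∈ T.powerset, (∏ _i ∈ K, (2:ℤ)) * ∏ _i ∈ T \ K, (-1:ℤ) := by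
        refine Finset.sum_congr rfl fun K hK => ?_
        rw [Finset.prod_const, Finset.prod_const, Finset.card_sdiff_of_subset (Finset.mem_powerset.mp hK)]
    _ = ∏ _i ∈ T, ((2:ℤ) + (-1)) := (Finset.prod_add _ _ T).symm
    _ = 1 := by norm_num

lemma sum_signed (S : Finset (Fin d)) :
    ∑ J : Finset (Fin d), (if S ⊆ J then (2:ℤ) ^ J.card * (-1) ^ (d - J.card) else 0)
      = 2 ^ S.card := by
  rw [← Finset.sum_filter]
  have hstep : ∑ J ∈ Finset.univ.filter (fun J => S ⊆ J), (2:ℤ) ^ J.card * (-1) ^ (d - J.card)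
      = ∑ K ∈ Sᶜ.powerset, (2:ℤ) ^ S.card * ((2:ℤ) ^ K.card * (-1) ^ (Sᶜ.card - K.card)) := by
    refine Finset.sum_nbij' (i := fun J => J \ S) (j := fun K => S ∪ K) ?_ ?_ ?_ ?_ ?_
    · intro J hJ
      rw [Finset.mem_filter] at hJ
      exact Finset.mem_powerset.mpr (fun i hi => Finset.mem_compl.mpr (Finset.mem_sdiff.mp hi).2)
    · intro K hK
      exact Finset.mem_filter.mpr ⟨Finset.mem_univ _, Finset.subset_union_left⟩
    · intro J hJ
      rw [Finset.mem_filter] at hJ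
      exact Finset.union_sdiff_of_subset hJ.2
    · intro K hK
      apply Finset.union_sdiff_cancel_left
      rw [Finset.disjoint_left]
      intro a haS haK
      exact (Finset.mem_compl.mp (Finset.mem_powerset.mp hK haK)) haS
    · intro J hJ
      rw [Finset.mem_filter] at hJ
      have h1 : S.card ≤ J.card := Finset.card_le_card hJ.2
      have h2 : J.card ≤ d := le_trans (Finset.card_le_univ J) (by simp)
      have h3 : (J \ S).card = J.card - S.card := Finset.card_sdiff_of_subset hJ.2
      have h4 : Sᶜ.card = d - S.card := by
        rw [Finset.card_compl]; simp
      have h5 : S.card ≤ d := le_trans (Finset.card_le_univ S) (by simp)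
      beta_reduce
      rw [← mul_assoc, ← pow_add]
      congr 1
      · congr 1; omega
      · congr 1; omega
  rw [hstep, ← Finset.mul_sum, sum_pm, mul_one]

end AuxProof

end ABP

open ABP

/-- Lattice point counting identity for unconditional polytopes.
For an anti-blocking lattice polytope `P ⊂ ℝ^d_{≥0}` of dimension `d` and `m ≥ 1`,
`L_{P^±}(m) = ∑_{J ⊆ [d]} 2^{|J|} (-1)^{d-|J|} L_{π_J(P)}(m)`. -/
theorem latticeCount_uncond_formula {d : ℕ} (P : Set (Fin d → ℝ))
    (hlat : IsLatticePolytope P) (hab : IsAntiBlocking P) (hdim : polyDim P = d)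
    (m : ℕ) (hm : 1 ≤ m) :
    (latticeCount (uncond P) m : ℤ) =
      ∑ J : Finset (Fin d),
        2 ^ J.card * (-1) ^ (d - J.card) * (latticeCount (projSet J P) m : ℤ) := by
  classical
  have hm' : (0:ℝ) < m := by exact_mod_cast hm
  have hbd : Bornology.IsBounded P := by
    obtain ⟨S, -, rfl⟩ := hlat
    exact isBounded_convexHull.mpr S.finite_toSet.isBounded
  have hfin : {z : Fin d → ℤ | (fun i => (z i : ℝ)) ∈ (m : ℝ) • P}.Finite :=
    finite_lattice_of_bounded (bounded_smul' hbd _)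
  have hRHS : ∀ J : Finset (Fin d),
      (latticeCount (projSet J P) m : ℤ)
        = ∑ z ∈ hfin.toFinset, (if ∀ i ∉ J, z i = 0 then (1:ℤ) else 0) := by
    intro J
    rw [latticeCount_projSet hab hm J hfin, Finset.card_filter]
    push_cast
    rfl
  rw [latticeCount_uncond_eq_sum hab hm hbd hfin]
  calc ((∑ z ∈ hfin.toFinset, 2 ^ (Finset.univ.filter (fun i => z i ≠ 0)).card : ℕ) : ℤ)
      = ∑ z ∈ hfin.toFinset, (2:ℤ) ^ (Finset.univ.filter (fun i => z i ≠ 0)).card := by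
        push_cast; rfl
    _ = ∑ z ∈ hfin.toFinset, ∑ J : Finset (Fin d),
          (if (Finset.univ.filter (fun i => z i ≠ 0)) ⊆ J then
            (2:ℤ) ^ J.card * (-1) ^ (d - J.card) else 0) :=
        Finset.sum_congr rfl fun z _ => (sum_signed _).symm
    _ = ∑ J : Finset (Fin d), ∑ z ∈ hfin.toFinset,
          (if (Finset.univ.filter (fun i => z i ≠ 0)) ⊆ J then
            (2:ℤ) ^ J.card * (-1) ^ (d - J.card) else 0) := Finset.sum_comm
    _ = ∑ J : Finset (Fin d),
          2 ^ J.card * (-1) ^ (d - J.card) * (latticeCount (projSet J P) m : ℤ) := by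
        refine Finset.sum_congr rfl fun J _ => ?_
        rw [hRHS J, Finset.mul_sum]
        refine Finset.sum_congr rfl fun z hz => ?_
        rw [mul_ite, mul_one, mul_zero]
        refine if_congr ?_ rfl rfl
        constructor
        · intro h i hi
          by_contra h0
          exact hi (h (Finset.mem_filter.mpr ⟨Finset.mem_univ _, h0⟩))
        · intro h i hi
          by_contra hiJ
          exact (Finset.mem_filter.mp hi).2 (h i hiJ)
end
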